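/- arXiv:1310.6914 — 2 statements merged into one kernel-verified Lean document; each statement's English description precedes it below -/
import Mathlib

section
/- Let σ be an n-dimensional polyhedral cone in ℝⁿ and let Σ' be a finite fan subdividing σ (i.e. the union of the cones of Σ' equals σ). Let T be the set of cones τ ∈ Σ' whose relative interior is contained in the relative interior of σ. Then Σ_{τ ∈ T} (-1)^{dim τ} = (-1)^{dim σ}. Equivalently, the relative interiors of the cones in T form a partition of the relative interior of σ, and the alternating sum of their Euler characteristics with compact supports equals that of an open n-cell. -/
/-!
The relative interiors of the cones of `T` partition `σ⁰`, so `1_{σ⁰} = ∑_{τ ∈ T} 1_{τ⁰}` and it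
suffices to have a linear functional `χ` (integration against the Euler characteristic with compact
supports) with `χ 1_{K⁰} = (-1) ^ dim K` for every nonempty convex `K ⊆ ℝⁿ`.

On `ℝ` take `χ g = ∑ₓ (g x - g (x⁺)) - g (-∞)`: it is linear on functions with right limits, a
limit at `-∞` and finitely many jumps, a point contributes `1` and an open interval contributes `-1`
(through its left end, or through `-∞`). On `ℝⁿ⁺¹` integrate out the last `n` coordinates first.
Slicing a convex `K` at height `c`, the slice of `K⁰` is nonempty exactly when `c ∈ (π K)⁰` for the
first-coordinate projection `π`, and it is then the relative interior of the slice of `K`, whose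
dimension is `dim K - dim π K` by rank–nullity. So by induction the inner integral is
`(-1) ^ (dim K - dim π K) • 1_{(π K)⁰}`, and the one-dimensional case finishes.
-/

open scoped Classical

/-- A (convex) polyhedral cone in `ℝⁿ`: the set of nonnegative combinations of finitely
many vectors. -/
def IsPolyhedralCone {n : ℕ} (C : Set (Fin n → ℝ)) : Prop :=
  ∃ (m : ℕ) (v : Fin m → (Fin n → ℝ)),
    C = {x | ∃ c : Fin m → ℝ, (∀ i, 0 ≤ c i) ∧ x = ∑ i, c i • v i}

open Filter Topology Set Function Module

noncomputable def rightJump (g : ℝ → ℝ) (x : ℝ) : ℝ := g x - limUnder (𝓝[>] x) g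

noncomputable def eulerInt₁ (g : ℝ → ℝ) : ℝ := (∑ᶠ x, rightJump g x) - limUnder atBot g

structure HasEulerInt₁ (g : ℝ → ℝ) (v : ℝ) : Prop where
  exists_tendsto_nhdsGT : ∀ x, ∃ l, Tendsto g (𝓝[>] x) (𝓝 l)
  exists_tendsto_atBot : ∃ l, Tendsto g atBot (𝓝 l)
  finite_support_rightJump : (support (rightJump g)).Finite
  eulerInt₁_eq : eulerInt₁ g = v

theorem hasEulerInt₁_of_tendsto {g r : ℝ → ℝ} {b : ℝ} (s : Finset ℝ)
    (hr : ∀ x, Tendsto g (𝓝[>] x) (𝓝 (r x))) (hb : Tendsto g atBot (𝓝 b))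
    (hs : ∀ x ∉ s, g x = r x) : HasEulerInt₁ g (∑ x ∈ s, (g x - r x) - b) := by
  have hjump : rightJump g = g - r := funext fun x => by rw [rightJump, (hr x).limUnder_eq]; rfl
  have hsupp : support (rightJump g) ⊆ s := fun x hx => by
    by_contra h
    exact hx (by rw [hjump, Pi.sub_apply, hs x h, sub_self])
  refine ⟨fun x => ⟨_, hr x⟩, ⟨_, hb⟩, s.finite_toSet.subset hsupp, ?_⟩
  rw [eulerInt₁, finsum_eq_sum_of_support_subset _ hsupp, hb.limUnder_eq, hjump]
  rfl

theorem hasEulerInt₁_one : HasEulerInt₁ 1 (-1) := by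
  have := hasEulerInt₁_of_tendsto (g := 1) (r := 1) (b := 1) ∅ (fun _ => tendsto_const_nhds)
    tendsto_const_nhds (fun _ _ => rfl)
  rwa [Finset.sum_empty, zero_sub] at this

namespace HasEulerInt₁

variable {f g : ℝ → ℝ} {u v : ℝ}

theorem add (hf : HasEulerInt₁ f u) (hg : HasEulerInt₁ g v) : HasEulerInt₁ (f + g) (u + v) := by
  choose lf hlf using hf.exists_tendsto_nhdsGT
  choose lg hlg using hg.exists_tendsto_nhdsGT
  obtain ⟨bf, hbf⟩ := hf.exists_tendsto_atBot
  obtain ⟨bg, hbg⟩ := hg.exists_tendsto_atBot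
  have hlfg x : Tendsto (f + g) (𝓝[>] x) (𝓝 (lf x + lg x)) := (hlf x).add (hlg x)
  have hbfg : Tendsto (f + g) atBot (𝓝 (bf + bg)) := hbf.add hbg
  have hjump : rightJump (f + g) = rightJump f + rightJump g := by
    ext x
    simp only [rightJump, Pi.add_apply, (hlfg x).limUnder_eq, (hlf x).limUnder_eq,
      (hlg x).limUnder_eq]
    ring
  refine ⟨fun x => ⟨_, hlfg x⟩, ⟨_, hbfg⟩,
    (hf.finite_support_rightJump.union hg.finite_support_rightJump).subset
      (hjump ▸ support_add _ _), ?_⟩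
  rw [← hf.eulerInt₁_eq, ← hg.eulerInt₁_eq, eulerInt₁, eulerInt₁, eulerInt₁, hjump,
    hbfg.limUnder_eq, hbf.limUnder_eq, hbg.limUnder_eq, Pi.add_def,
    finsum_add_distrib hf.finite_support_rightJump hg.finite_support_rightJump]
  ring

theorem const_smul (hg : HasEulerInt₁ g v) (r : ℝ) : HasEulerInt₁ (r • g) (r * v) := by
  choose l hl using hg.exists_tendsto_nhdsGT
  obtain ⟨b, hb⟩ := hg.exists_tendsto_atBot
  have hrl x : Tendsto (r • g) (𝓝[>] x) (𝓝 (r • l x)) := (hl x).const_smul r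
  have hrb : Tendsto (r • g) atBot (𝓝 (r • b)) := hb.const_smul r
  have hjump : rightJump (r • g) = r • rightJump g := by
    ext x
    simp only [rightJump, Pi.smul_apply, smul_eq_mul, (hrl x).limUnder_eq, (hl x).limUnder_eq]
    ring
  refine ⟨fun x => ⟨_, hrl x⟩, ⟨_, hrb⟩,
    hg.finite_support_rightJump.subset (hjump ▸ support_const_smul_subset r _), ?_⟩
  rw [← hg.eulerInt₁_eq, eulerInt₁, eulerInt₁, hjump, hrb.limUnder_eq, hb.limUnder_eq]
  simp only [Pi.smul_apply, smul_eq_mul, ← mul_finsum]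
  ring

theorem sub (hf : HasEulerInt₁ f u) (hg : HasEulerInt₁ g v) : HasEulerInt₁ (f - g) (u - v) := by
  simpa [sub_eq_add_neg] using hf.add (hg.const_smul (-1))

theorem sum {ι : Type*} {s : Finset ι} {g : ι → ℝ → ℝ} {v : ι → ℝ}
    (hg : ∀ i ∈ s, HasEulerInt₁ (g i) (v i)) : HasEulerInt₁ (∑ i ∈ s, g i) (∑ i ∈ s, v i) := by
  induction s using Finset.induction_on with
  | empty =>
    simpa using hasEulerInt₁_one.const_smul 0
  | insert i s hi ih =>
    simp only [Finset.sum_insert hi]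
    exact (hg i (s.mem_insert_self i)).add (ih fun j hj => hg j (Finset.mem_insert_of_mem hj))

end HasEulerInt₁

theorem hasEulerInt₁_indicator_singleton (p : ℝ) :
    HasEulerInt₁ (({p} : Set ℝ).indicator (1 : ℝ → ℝ)) 1 := by
  have hr x : Tendsto (({p} : Set ℝ).indicator (1 : ℝ → ℝ)) (𝓝[>] x) (𝓝 0) := by
    refine tendsto_nhds_of_eventually_eq ?_
    rcases lt_or_ge x p with hxp | hpx
    · filter_upwards [Ioo_mem_nhdsGT hxp] with y hy
      exact indicator_of_notMem (s := {p}) (ne_of_lt hy.2) _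
    · filter_upwards [self_mem_nhdsWithin] with y (hy : x < y)
      exact indicator_of_notMem (s := {p}) (ne_of_gt (hpx.trans_lt hy)) _
  have hb : Tendsto (({p} : Set ℝ).indicator (1 : ℝ → ℝ)) atBot (𝓝 0) := by
    refine tendsto_nhds_of_eventually_eq ?_
    filter_upwards [Iio_mem_atBot p] with y hy
    exact indicator_of_notMem (s := {p}) (ne_of_lt (mem_Iio.1 hy)) _
  have := hasEulerInt₁_of_tendsto {p} hr hb fun x hx =>
    indicator_of_notMem (s := {p}) (Finset.notMem_singleton.1 hx) _
  simpa using this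

theorem hasEulerInt₁_indicator_Ioi (a : ℝ) : HasEulerInt₁ ((Ioi a).indicator (1 : ℝ → ℝ)) (-1) := by
  have hr x : Tendsto ((Ioi a).indicator (1 : ℝ → ℝ)) (𝓝[>] x) (𝓝 ((Ici a).indicator 1 x)) := by
    refine tendsto_nhds_of_eventually_eq ?_
    rcases lt_or_ge x a with hxa | hax
    · filter_upwards [Ioo_mem_nhdsGT hxa] with y hy
      rw [indicator_of_notMem (s := Ioi a) (not_lt.2 hy.2.le),
        indicator_of_notMem (s := Ici a) (not_le.2 hxa)]
    · filter_upwards [self_mem_nhdsWithin] with y (hy : x < y)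
      rw [indicator_of_mem (s := Ioi a) (hax.trans_lt hy), indicator_of_mem (s := Ici a) hax]
      rfl
  have hb : Tendsto ((Ioi a).indicator (1 : ℝ → ℝ)) atBot (𝓝 0) := by
    refine tendsto_nhds_of_eventually_eq ?_
    filter_upwards [Iio_mem_atBot a] with y hy
    exact indicator_of_notMem (s := Ioi a) (not_lt.2 (le_of_lt (mem_Iio.1 hy))) _
  have := hasEulerInt₁_of_tendsto {a} hr hb fun x hx => by
    rcases lt_or_gt_of_ne (Finset.notMem_singleton.1 hx) with hxa | hax
    · rw [indicator_of_notMem (s := Ioi a) (not_lt.2 hxa.le),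
        indicator_of_notMem (s := Ici a) (not_le.2 hxa)]
    · rw [indicator_of_mem (s := Ioi a) hax, indicator_of_mem (s := Ici a) hax.le]
  simpa using this

theorem hasEulerInt₁_indicator_Ioo {a b : ℝ} (hab : a < b) :
    HasEulerInt₁ ((Ioo a b).indicator 1) (-1) := by
  have h : (Ioo a b).indicator (1 : ℝ → ℝ) =
      (Ioi a).indicator 1 - (Ioi b).indicator 1 - ({b} : Set ℝ).indicator 1 := by
    ext x
    simp only [Pi.sub_apply, indicator_apply, mem_Ioo, mem_Ioi, mem_singleton_iff, Pi.one_apply]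
    grind
  rw [h]
  convert ((hasEulerInt₁_indicator_Ioi a).sub (hasEulerInt₁_indicator_Ioi b)).sub
    (hasEulerInt₁_indicator_singleton b) using 1
  norm_num

theorem hasEulerInt₁_indicator_Iio (b : ℝ) : HasEulerInt₁ ((Iio b).indicator 1) (-1) := by
  have h : (Iio b).indicator (1 : ℝ → ℝ) =
      1 - (Ioi b).indicator 1 - ({b} : Set ℝ).indicator 1 := by
    ext x
    simp only [Pi.sub_apply, indicator_apply, mem_Iio, mem_Ioi, mem_singleton_iff, Pi.one_apply]
    grind
  rw [h]
  convert (hasEulerInt₁_one.sub (hasEulerInt₁_indicator_Ioi b)).sub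
    (hasEulerInt₁_indicator_singleton b) using 1
  norm_num

section IntrinsicInterior

variable {E F : Type*} [NormedAddCommGroup E] [NormedSpace ℝ E] [NormedAddCommGroup F]
  [NormedSpace ℝ F] {K : Set E} {x y z : E}

theorem exists_pos_add_smul_mem_of_mem_intrinsicInterior (hx : x ∈ intrinsicInterior ℝ K)
    {v : E} (hv : v ∈ vectorSpan ℝ K) : ∃ ε > (0 : ℝ), x + ε • v ∈ K := by
  obtain ⟨x, hx, rfl⟩ := hx
  have hmem (ε : ℝ) : (x : E) + ε • v ∈ affineSpan ℝ K := by
    rw [add_comm]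
    exact AffineSubspace.vadd_mem_of_mem_direction
      (by rw [direction_affineSpan]; exact Submodule.smul_mem _ ε hv) x.2
  let γ : ℝ → affineSpan ℝ K := fun ε => ⟨_, hmem ε⟩
  have hγ : Tendsto γ (𝓝[>] 0) (𝓝 x) := by
    have : Continuous γ := by fun_prop
    simpa [γ] using (this.tendsto 0).mono_left nhdsWithin_le_nhds
  obtain ⟨ε, hεK, hε⟩ :=
    ((hγ.eventually (mem_interior_iff_mem_nhds.1 hx)).and self_mem_nhdsWithin).exists
  exact ⟨ε, hε, hεK⟩

theorem Convex.add_smul_sub_mem_intrinsicInterior (hK : Convex ℝ K)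
    (hx : x ∈ intrinsicInterior ℝ K) (hy : y ∈ K) {t : ℝ} (ht₀ : 0 ≤ t) (ht₁ : t < 1) :
    x + t • (y - x) ∈ intrinsicInterior ℝ K := by
  obtain ⟨x, hx, rfl⟩ := hx
  have hyA : y ∈ affineSpan ℝ K := subset_affineSpan ℝ K hy
  have hpA : (x : E) + t • (y - x) ∈ affineSpan ℝ K := by
    simpa [AffineMap.lineMap_apply_module', add_comm] using AffineMap.lineMap_mem t x.2 hyA
  refine ⟨⟨_, hpA⟩, ?_, rfl⟩
  -- the homothety centred at `y` with ratio `(1 - t)⁻¹` maps the point back to `x`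
  let φ : affineSpan ℝ K → affineSpan ℝ K := fun u =>
    ⟨y + (1 - t)⁻¹ • ((u : E) - y), by
      simpa [AffineMap.lineMap_apply_module', add_comm] using AffineMap.lineMap_mem _ hyA u.2⟩
  have hφ : Continuous φ := by fun_prop
  have hφx : φ ⟨_, hpA⟩ = x := by
    have : (x : E) + t • (y - x) - y = (1 - t) • ((x : E) - y) := by module
    ext
    simp only [φ, this, smul_smul, inv_mul_cancel₀ (sub_ne_zero.2 ht₁.ne'), one_smul]
    abel
  rw [mem_interior_iff_mem_nhds] at hx ⊢
  filter_upwards [hφ.continuousAt.preimage_mem_nhds (hφx ▸ hx)] with u hu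
  have hu' : (u : E) = (1 - t) • (φ u : E) + t • y := by
    simp only [φ, smul_add, smul_smul, mul_inv_cancel₀ (sub_ne_zero.2 ht₁.ne'), one_smul]
    module
  rw [mem_preimage, hu']
  exact hK hu hy (by linarith) ht₀ (by ring)

theorem exists_one_lt_add_smul_sub_mem (hx : x ∈ intrinsicInterior ℝ K) (hy : y ∈ K) :
    ∃ μ > (1 : ℝ), y + μ • (x - y) ∈ K := by
  obtain ⟨ε, hε, h⟩ := exists_pos_add_smul_mem_of_mem_intrinsicInterior hx
    (vsub_mem_vectorSpan ℝ (intrinsicInterior_subset hx) hy)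
  refine ⟨1 + ε, by linarith, ?_⟩
  convert h using 1
  rw [vsub_eq_sub]
  module

theorem add_inv_smul_add_smul_sub_sub {μ : ℝ} (hμ : μ ≠ 0) (x z : E) :
    z + μ⁻¹ • (z + μ • (x - z) - z) = x := by
  rw [add_sub_cancel_left, smul_smul, inv_mul_cancel₀ hμ, one_smul, add_sub_cancel]

theorem Convex.mem_intrinsicInterior_of_add_smul_sub_mem (hK : Convex ℝ K)
    (hz : z ∈ intrinsicInterior ℝ K) {μ : ℝ} (hμ : 1 < μ) (hw : z + μ • (x - z) ∈ K) :
    x ∈ intrinsicInterior ℝ K :=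
  add_inv_smul_add_smul_sub_sub (by positivity) x z ▸
    hK.add_smul_sub_mem_intrinsicInterior hz hw (by positivity) (inv_lt_one_of_one_lt₀ hμ)

theorem Convex.mem_intrinsicInterior_iff [FiniteDimensional ℝ E] (hK : Convex ℝ K) :
    x ∈ intrinsicInterior ℝ K ↔ x ∈ K ∧ ∀ y ∈ K, ∃ μ > (1 : ℝ), y + μ • (x - y) ∈ K := by
  refine ⟨fun hx => ⟨intrinsicInterior_subset hx, fun y hy => exists_one_lt_add_smul_sub_mem hx hy⟩,
    fun ⟨hx, h⟩ => ?_⟩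
  obtain ⟨z, hz⟩ := Set.Nonempty.intrinsicInterior hK ⟨x, hx⟩
  obtain ⟨μ, hμ, hw⟩ := h z (intrinsicInterior_subset hz)
  exact hK.mem_intrinsicInterior_of_add_smul_sub_mem hz hμ hw

theorem AffineMap.apply_add_smul_sub (f : E →ᵃ[ℝ] F) (x y : E) (μ : ℝ) :
    f (y + μ • (x - y)) = f y + μ • (f x - f y) := by
  simpa [AffineMap.lineMap_apply_module', add_comm] using f.apply_lineMap y x μ

theorem vectorSpan_inter_preimage_singleton (f : E →ᵃ[ℝ] F) {p : E}
    (hp : p ∈ intrinsicInterior ℝ K) :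
    vectorSpan ℝ (K ∩ f ⁻¹' {f p}) = vectorSpan ℝ K ⊓ LinearMap.ker f.linear := by
  refine le_antisymm (le_inf (vectorSpan_mono ℝ inter_subset_left) ?_) ?_
  · rw [vectorSpan_def, Submodule.span_le]
    rintro _ ⟨a, ⟨-, ha⟩, b, ⟨-, hb⟩, rfl⟩
    simp only [SetLike.mem_coe, LinearMap.mem_ker, f.linearMap_vsub,
      mem_singleton_iff.1 ha, mem_singleton_iff.1 hb, vsub_self]
  · rintro v ⟨hv, hfv⟩
    obtain ⟨ε, hε, h⟩ := exists_pos_add_smul_mem_of_mem_intrinsicInterior hp hv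
    have hεv : f (p + ε • v) = f p := by
      rw [add_comm, ← vadd_eq_add, f.map_vadd, f.linear.map_smul, LinearMap.mem_ker.1 hfv,
        smul_zero, zero_vadd]
    have h₁ : p + ε • v ∈ K ∩ f ⁻¹' {f p} := ⟨h, hεv⟩
    have h₂ : p ∈ K ∩ f ⁻¹' {f p} := ⟨intrinsicInterior_subset hp, rfl⟩
    have := vsub_mem_vectorSpan ℝ h₁ h₂
    rw [vsub_eq_sub, add_sub_cancel_left] at this
    simpa [hε.ne'] using Submodule.smul_mem _ ε⁻¹ this

variable [FiniteDimensional ℝ E]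

theorem Convex.intrinsicInterior_image [FiniteDimensional ℝ F] (hK : Convex ℝ K) (f : E →ᵃ[ℝ] F) :
    intrinsicInterior ℝ (f '' K) = f '' intrinsicInterior ℝ K := by
  ext x'
  constructor
  · intro hx'
    obtain ⟨x, hx, -⟩ := intrinsicInterior_subset hx'
    obtain ⟨z, hz⟩ := Set.Nonempty.intrinsicInterior hK ⟨x, hx⟩
    obtain ⟨μ, hμ, w, hw, hfw⟩ :=
      exists_one_lt_add_smul_sub_mem hx' (mem_image_of_mem f (intrinsicInterior_subset hz))
    refine ⟨z + μ⁻¹ • (w - z), hK.add_smul_sub_mem_intrinsicInterior hz hw (by positivity)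
      (inv_lt_one_of_one_lt₀ hμ), ?_⟩
    rw [f.apply_add_smul_sub, hfw, add_inv_smul_add_smul_sub_sub (by positivity)]
  · rintro ⟨x, hx, rfl⟩
    refine ((hK.affine_image f).mem_intrinsicInterior_iff).2
      ⟨mem_image_of_mem f (intrinsicInterior_subset hx), ?_⟩
    rintro _ ⟨y, hy, rfl⟩
    obtain ⟨μ, hμ, h⟩ := exists_one_lt_add_smul_sub_mem hx hy
    exact ⟨μ, hμ, f.apply_add_smul_sub x y μ ▸ mem_image_of_mem f h⟩

theorem Convex.intrinsicInterior_inter_preimage_singleton (hK : Convex ℝ K) (f : E →ᵃ[ℝ] F)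
    {p : E} (hp : p ∈ intrinsicInterior ℝ K) :
    intrinsicInterior ℝ (K ∩ f ⁻¹' {f p}) = intrinsicInterior ℝ K ∩ f ⁻¹' {f p} := by
  have hfib : Convex ℝ (K ∩ f ⁻¹' {f p}) := hK.inter ((convex_singleton _).affine_preimage f)
  ext x
  constructor
  · intro hx
    have hxA := (intrinsicInterior_subset hx).2
    obtain ⟨μ, hμ, h⟩ := exists_one_lt_add_smul_sub_mem hx ⟨intrinsicInterior_subset hp, rfl⟩
    exact ⟨hK.mem_intrinsicInterior_of_add_smul_sub_mem hp hμ h.1, hxA⟩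
  · rintro ⟨hx, hxA⟩
    refine hfib.mem_intrinsicInterior_iff.2 ⟨⟨intrinsicInterior_subset hx, hxA⟩, ?_⟩
    rintro y ⟨hy, hyA⟩
    obtain ⟨μ, hμ, h⟩ := exists_one_lt_add_smul_sub_mem hx hy
    refine ⟨μ, hμ, h, ?_⟩
    rw [mem_preimage, f.apply_add_smul_sub, mem_singleton_iff.1 hxA, mem_singleton_iff.1 hyA]
    simp

theorem finrank_vectorSpan_image_add_inter_preimage_singleton (f : E →ᵃ[ℝ] F) {p : E}
    (hp : p ∈ intrinsicInterior ℝ K) :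
    finrank ℝ (vectorSpan ℝ (f '' K)) + finrank ℝ (vectorSpan ℝ (K ∩ f ⁻¹' {f p})) =
      finrank ℝ (vectorSpan ℝ K) := by
  have := (f.linear.domRestrict (vectorSpan ℝ K)).finrank_range_add_finrank_ker
  rw [LinearMap.range_domRestrict, AffineMap.map_vectorSpan, LinearMap.ker_domRestrict] at this
  rw [vectorSpan_inter_preimage_singleton f hp, ← this]
  rw [← top_inf_eq (Submodule.comap _ _), ← Submodule.comap_subtype_self, ← Submodule.comap_inf]
  exact congrArg _ (Submodule.comapSubtypeEquivOfLe inf_le_left).finrank_eq.symm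

end IntrinsicInterior

theorem vectorSpan_eq_top_of_nontrivial {k : Type*} [Field k] {s : Set k} (hs : s.Nontrivial) :
    vectorSpan k s = ⊤ := by
  obtain ⟨p, hp, q, hq, hpq⟩ := hs
  exact Ideal.eq_top_of_isUnit_mem _ (vsub_mem_vectorSpan k hq hp)
    (isUnit_iff_ne_zero.2 (sub_ne_zero.2 hpq.symm))

theorem Convex.intrinsicInterior_eq_interior_of_nontrivial {I : Set ℝ} (hI : Convex ℝ I)
    (hnt : I.Nontrivial) : intrinsicInterior ℝ I = interior I := by
  refine (interior_subset_intrinsicInterior).antisymm' fun x hx => ?_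
  have hspan := vectorSpan_eq_top_of_nontrivial hnt
  obtain ⟨ε, hε, hr⟩ := exists_pos_add_smul_mem_of_mem_intrinsicInterior hx
    (hspan ▸ Submodule.mem_top : (1 : ℝ) ∈ vectorSpan ℝ I)
  obtain ⟨δ, hδ, hl⟩ := exists_pos_add_smul_mem_of_mem_intrinsicInterior hx
    (hspan ▸ Submodule.mem_top : (-1 : ℝ) ∈ vectorSpan ℝ I)
  simp only [smul_eq_mul, mul_one, mul_neg] at hr hl
  exact mem_interior_iff_mem_nhds.2 (mem_of_superset (Icc_mem_nhds (by linarith) (by linarith))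
    (hI.ordConnected.out hl hr))

theorem Convex.hasEulerInt₁_indicator_intrinsicInterior {I : Set ℝ} (hI : Convex ℝ I)
    (hne : I.Nonempty) :
    HasEulerInt₁ ((intrinsicInterior ℝ I).indicator 1) ((-1) ^ finrank ℝ (vectorSpan ℝ I)) := by
  rcases hne.exists_eq_singleton_or_nontrivial with ⟨p, rfl⟩ | hnt
  · rw [intrinsicInterior_singleton, vectorSpan_singleton, finrank_bot, pow_zero]
    exact hasEulerInt₁_indicator_singleton p
  rw [vectorSpan_eq_top_of_nontrivial hnt, finrank_top, finrank_self, pow_one,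
    hI.intrinsicInterior_eq_interior_of_nontrivial hnt]
  have hint : (interior I).Nonempty :=
    hI.intrinsicInterior_eq_interior_of_nontrivial hnt ▸ hnt.nonempty.intrinsicInterior hI
  rcases hI.isPreconnected.mem_intervals with h | h | h | h | h | h | h | h | h | h <;>
    rw [h] at hint ⊢ <;>
    simp only [interior_Icc, interior_Ico, interior_Ioc, interior_Ioo, interior_Ici,
      interior_Ioi, interior_Iic, interior_Iio, interior_univ, interior_empty,
      indicator_univ] at hint ⊢
  all_goals first
    | exact hasEulerInt₁_indicator_Ioo (nonempty_Ioo.1 hint)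
    | exact hasEulerInt₁_indicator_Ioi _
    | exact hasEulerInt₁_indicator_Iio _
    | exact hasEulerInt₁_one
    | exact absurd hint not_nonempty_empty

theorem eulerInt₁_sum_indicator_intrinsicInterior {ι : Type*} (s : Finset ι) (I : ι → Set ℝ)
    (b : ι → ℝ) (hI : ∀ i ∈ s, Convex ℝ (I i)) (hne : ∀ i ∈ s, (I i).Nonempty) :
    eulerInt₁ (fun c => ∑ i ∈ s, b i * (intrinsicInterior ℝ (I i)).indicator 1 c) =
      ∑ i ∈ s, b i * (-1) ^ finrank ℝ (vectorSpan ℝ (I i)) := by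
  have := HasEulerInt₁.sum fun i hi =>
    ((hI i hi).hasEulerInt₁_indicator_intrinsicInterior (hne i hi)).const_smul (b i)
  convert this.eulerInt₁_eq using 2
  ext c
  simp [Finset.sum_apply]

section Slice

variable {n : ℕ}

noncomputable def consAffine (n : ℕ) (c : ℝ) : (Fin n → ℝ) →ᵃ[ℝ] (Fin (n + 1) → ℝ) where
  toFun x := Fin.cons c x
  linear := (Fin.consLinearEquiv ℝ fun _ => ℝ).toLinearMap ∘ₗ LinearMap.inr ℝ ℝ (Fin n → ℝ)
  map_vadd' x v := by ext i; refine Fin.cases ?_ (fun j => ?_) i <;> simp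

@[simp]
theorem consAffine_apply (c : ℝ) (x : Fin n → ℝ) : consAffine n c x = Fin.cons c x := rfl

theorem consAffine_linear_injective (c : ℝ) : Injective (consAffine n c).linear :=
  show Injective ((Fin.consLinearEquiv ℝ fun _ => ℝ) ∘ LinearMap.inr ℝ ℝ (Fin n → ℝ)) from
    (LinearEquiv.injective _).comp LinearMap.inr_injective

theorem consAffine_injective (c : ℝ) : Injective (consAffine n c) :=
  (consAffine n c).linear_injective_iff.1 (consAffine_linear_injective c)

noncomputable def projZero (n : ℕ) : (Fin (n + 1) → ℝ) →ᵃ[ℝ] ℝ :=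
  (LinearMap.proj 0).toAffineMap

@[simp]
theorem projZero_apply (y : Fin (n + 1) → ℝ) : projZero n y = y 0 := rfl

theorem image_consAffine_preimage (K : Set (Fin (n + 1) → ℝ)) (c : ℝ) :
    consAffine n c '' (consAffine n c ⁻¹' K) = K ∩ projZero n ⁻¹' {c} := by
  ext y
  refine ⟨?_, fun ⟨hy, hy0⟩ => ⟨Fin.tail y, ?_, ?_⟩⟩
  · rintro ⟨x, hx, rfl⟩
    exact ⟨hx, rfl⟩
  all_goals
    change y 0 = c at hy0
    simp only [consAffine_apply, mem_preimage, ← hy0, Fin.cons_self_tail]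
  exact hy

variable {K : Set (Fin (n + 1) → ℝ)}

theorem Convex.image_consAffine_intrinsicInterior_preimage (hK : Convex ℝ K)
    {p : Fin (n + 1) → ℝ} (hp : p ∈ intrinsicInterior ℝ K) :
    consAffine n (p 0) '' intrinsicInterior ℝ (consAffine n (p 0) ⁻¹' K) =
      intrinsicInterior ℝ K ∩ projZero n ⁻¹' {p 0} := by
  rw [← (hK.affine_preimage (consAffine n (p 0))).intrinsicInterior_image,
    image_consAffine_preimage]
  exact hK.intrinsicInterior_inter_preimage_singleton (projZero n) hp

theorem Convex.cons_mem_intrinsicInterior_iff (hK : Convex ℝ K) {c : ℝ} {x : Fin n → ℝ} :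
    Fin.cons c x ∈ intrinsicInterior ℝ K ↔
      c ∈ intrinsicInterior ℝ (projZero n '' K) ∧
        x ∈ intrinsicInterior ℝ (consAffine n c ⁻¹' K) := by
  rw [hK.intrinsicInterior_image]
  constructor
  · intro hx
    refine ⟨⟨_, hx, rfl⟩, ?_⟩
    have himage := hK.image_consAffine_intrinsicInterior_preimage hx
    rw [Fin.cons_zero] at himage
    have hmem : Fin.cons c x ∈ intrinsicInterior ℝ K ∩ projZero n ⁻¹' {c} := ⟨hx, rfl⟩
    rw [← himage] at hmem
    obtain ⟨x', hx', he⟩ := hmem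
    rwa [← consAffine_injective c he]
  · rintro ⟨⟨p, hp, rfl⟩, hx⟩
    exact ((hK.image_consAffine_intrinsicInterior_preimage hp) ▸ mem_image_of_mem _ hx).1

theorem Convex.indicator_intrinsicInterior_cons (hK : Convex ℝ K) (c : ℝ) (x : Fin n → ℝ) :
    (intrinsicInterior ℝ K).indicator (1 : (Fin (n + 1) → ℝ) → ℝ) (Fin.cons c x) =
      if c ∈ intrinsicInterior ℝ (projZero n '' K) then
        (intrinsicInterior ℝ (consAffine n c ⁻¹' K)).indicator 1 x else 0 := by
  by_cases hc : c ∈ intrinsicInterior ℝ (projZero n '' K) <;>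
    simp only [indicator_apply, hK.cons_mem_intrinsicInterior_iff, hc, true_and, false_and,
      if_true, if_false, Pi.one_apply]

theorem Convex.finrank_vectorSpan_preimage_consAffine_add (hK : Convex ℝ K) {c : ℝ}
    (hc : c ∈ intrinsicInterior ℝ (projZero n '' K)) :
    finrank ℝ (vectorSpan ℝ (consAffine n c ⁻¹' K)) + finrank ℝ (vectorSpan ℝ (projZero n '' K)) =
      finrank ℝ (vectorSpan ℝ K) := by
  obtain ⟨p, hp, rfl⟩ := hK.intrinsicInterior_image (projZero n) ▸ hc
  rw [← finrank_vectorSpan_image_add_inter_preimage_singleton (projZero n) hp, add_comm]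
  congr 1
  rw [← image_consAffine_preimage, ← AffineMap.map_vectorSpan]
  exact (Submodule.equivMapOfInjective _ (consAffine_linear_injective _) _).finrank_eq

theorem Convex.nonempty_preimage_consAffine (hK : Convex ℝ K) {c : ℝ}
    (hc : c ∈ intrinsicInterior ℝ (projZero n '' K)) : (consAffine n c ⁻¹' K).Nonempty := by
  obtain ⟨p, hp, rfl⟩ := hK.intrinsicInterior_image (projZero n) ▸ hc
  exact ⟨Fin.tail p, by simpa using intrinsicInterior_subset hp⟩

end Slice

noncomputable def eulerInt : (n : ℕ) → ((Fin n → ℝ) → ℝ) → ℝ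
  | 0, f => f 0
  | n + 1, f => eulerInt₁ fun c => eulerInt n fun x => f (Fin.cons c x)

theorem eulerInt_sum_indicator_intrinsicInterior (n : ℕ) {ι : Type*} (s : Finset ι)
    (K : ι → Set (Fin n → ℝ)) (a : ι → ℝ) (hK : ∀ i ∈ s, Convex ℝ (K i))
    (hne : ∀ i ∈ s, (K i).Nonempty) :
    eulerInt n (fun x => ∑ i ∈ s, a i * (intrinsicInterior ℝ (K i)).indicator 1 x) =
      ∑ i ∈ s, a i * (-1) ^ finrank ℝ (vectorSpan ℝ (K i)) := by
  induction n generalizing ι with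
  | zero =>
    refine Finset.sum_congr rfl fun i hi => ?_
    obtain ⟨x, hx⟩ := (hne i hi).intrinsicInterior (hK i hi)
    rw [Subsingleton.elim (0 : Fin 0 → ℝ) x, indicator_of_mem hx, finrank_zero_of_subsingleton]
    simp
  | succ n ih =>
    set P : ι → Set ℝ := fun i => projZero n '' K i
    have hsq (m : ℕ) : (-1 : ℝ) ^ m * (-1) ^ m = 1 := by rw [← mul_pow]; norm_num
    have hslice (c : ℝ) :
        (eulerInt n fun x =>
            ∑ i ∈ s, a i * (intrinsicInterior ℝ (K i)).indicator 1 (Fin.cons c x)) =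
          ∑ i ∈ s, a i * (-1) ^ finrank ℝ (vectorSpan ℝ (K i)) *
            (-1) ^ finrank ℝ (vectorSpan ℝ (P i)) * (intrinsicInterior ℝ (P i)).indicator 1 c := by
      have hsum (x : Fin n → ℝ) :
          ∑ i ∈ s, a i * (intrinsicInterior ℝ (K i)).indicator 1 (Fin.cons c x) =
            ∑ i ∈ s with c ∈ intrinsicInterior ℝ (P i),
              a i * (intrinsicInterior ℝ (consAffine n c ⁻¹' K i)).indicator 1 x := by
        rw [Finset.sum_filter]
        exact Finset.sum_congr rfl fun i hi => by
          rw [(hK i hi).indicator_intrinsicInterior_cons, mul_ite, mul_zero]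
      simp_rw [hsum]
      rw [ih _ _ a (fun i hi => (hK i (Finset.mem_filter.1 hi).1).affine_preimage _)
        (fun i hi => (hK i (Finset.mem_filter.1 hi).1).nonempty_preimage_consAffine
          (Finset.mem_filter.1 hi).2), Finset.sum_filter]
      refine Finset.sum_congr rfl fun i hi => ?_
      split_ifs with hc
      · rw [indicator_of_mem hc, ← (hK i hi).finrank_vectorSpan_preimage_consAffine_add hc,
          pow_add, Pi.one_apply, mul_one, mul_assoc, mul_assoc, hsq, mul_one]
      · rw [indicator_of_notMem hc, mul_zero]
    rw [eulerInt, funext hslice, eulerInt₁_sum_indicator_intrinsicInterior _ _ _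
      (fun i hi => (hK i hi).affine_image _) (fun i hi => (hne i hi).image _)]
    exact Finset.sum_congr rfl fun i _ => by rw [mul_assoc, hsq, mul_one]

theorem Convex.eulerInt_indicator_intrinsicInterior {n : ℕ} {K : Set (Fin n → ℝ)}
    (hK : Convex ℝ K) (hne : K.Nonempty) :
    eulerInt n ((intrinsicInterior ℝ K).indicator 1) = (-1) ^ finrank ℝ (vectorSpan ℝ K) := by
  simpa using eulerInt_sum_indicator_intrinsicInterior n {()} (fun _ => K) 1
    (fun _ _ => hK) (fun _ _ => hne)

theorem vectorSpan_eq_span_of_zero_mem {k E : Type*} [Ring k] [AddCommGroup E] [Module k E]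
    {s : Set E} (h : (0 : E) ∈ s) : vectorSpan k s = Submodule.span k s := by
  simp [vectorSpan_eq_span_vsub_set_right k h]

namespace IsPolyhedralCone

variable {n : ℕ} {C : Set (Fin n → ℝ)}

theorem zero_mem (h : IsPolyhedralCone C) : (0 : Fin n → ℝ) ∈ C := by
  obtain ⟨m, v, rfl⟩ := h
  exact ⟨0, fun _ => le_rfl, by simp⟩

theorem convex (h : IsPolyhedralCone C) : Convex ℝ C := by
  obtain ⟨m, v, rfl⟩ := h
  rintro _ ⟨c, hc, rfl⟩ _ ⟨d, hd, rfl⟩ p q hp hq -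
  refine ⟨p • c + q • d, fun i =>
    add_nonneg (mul_nonneg hp (hc i)) (mul_nonneg hq (hd i)), ?_⟩
  simp only [Finset.smul_sum, smul_smul, ← Finset.sum_add_distrib, ← add_smul, Pi.add_apply,
    Pi.smul_apply, smul_eq_mul]

theorem finrank_vectorSpan (h : IsPolyhedralCone C) :
    finrank ℝ (vectorSpan ℝ C) = Set.finrank ℝ C := by
  rw [vectorSpan_eq_span_of_zero_mem h.zero_mem]
  rfl

end IsPolyhedralCone

theorem stmt4_general {n : ℕ} (σ : Set (Fin n → ℝ)) (hσ : IsPolyhedralCone σ)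
    (hσdim : Set.finrank ℝ σ = n)
    {ι : Type} [Fintype ι] (C : ι → Set (Fin n → ℝ))
    (hC : ∀ i, IsPolyhedralCone (C i))
    (hdisj : Pairwise fun i j =>
      Disjoint (intrinsicInterior ℝ (C i)) (intrinsicInterior ℝ (C j)))
    (hpart : (⋃ i ∈ {i | intrinsicInterior ℝ (C i) ⊆ intrinsicInterior ℝ σ},
        intrinsicInterior ℝ (C i)) = intrinsicInterior ℝ σ) :
    ∑ i ∈ Finset.univ.filter
        (fun i => intrinsicInterior ℝ (C i) ⊆ intrinsicInterior ℝ σ),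
      (-1 : ℤ) ^ (Set.finrank ℝ (C i)) = (-1 : ℤ) ^ n := by
  set T := Finset.univ.filter fun i => intrinsicInterior ℝ (C i) ⊆ intrinsicInterior ℝ σ
  have hσT : intrinsicInterior ℝ σ = ⋃ i ∈ T, intrinsicInterior ℝ (C i) := by
    rw [← hpart]
    simp [T]
  have hσχ := hσ.convex.eulerInt_indicator_intrinsicInterior ⟨0, hσ.zero_mem⟩
  have hTχ := eulerInt_sum_indicator_intrinsicInterior n T C 1
    (fun i _ => (hC i).convex) (fun i _ => ⟨0, (hC i).zero_mem⟩)
  simp only [Pi.one_apply, one_mul, (hC _).finrank_vectorSpan] at hTχ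
  rw [hσT, Finset.indicator_biUnion _ _ (hdisj.set_pairwise _), hTχ, hσ.finrank_vectorSpan,
    hσdim] at hσχ
  exact_mod_cast hσχ

/-- Let `σ` be an `n`-dimensional polyhedral cone in `ℝⁿ` and let `Σ'` be a
finite fan subdividing `σ`: its cones `C i` are polyhedral, their union is `σ`, and their
relative interiors are pairwise disjoint; moreover (fan subdivision) the relative interiors
of the cones of `T = {i | (C i)⁰ ⊆ σ⁰}` partition the relative interior of `σ`.  Then
`Σ_{τ ∈ T} (-1)^{dim τ} = (-1)^{dim σ} = (-1)^n`. -/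
theorem stmt4 {n : ℕ} (σ : Set (Fin n → ℝ)) (hσ : IsPolyhedralCone σ)
    (hσdim : Set.finrank ℝ σ = n)
    {ι : Type} [Fintype ι] (C : ι → Set (Fin n → ℝ))
    (hC : ∀ i, IsPolyhedralCone (C i))
    (hcover : (⋃ i, C i) = σ)
    (hdisj : Pairwise fun i j =>
      Disjoint (intrinsicInterior ℝ (C i)) (intrinsicInterior ℝ (C j)))
    (hpart : (⋃ i ∈ {i | intrinsicInterior ℝ (C i) ⊆ intrinsicInterior ℝ σ},
        intrinsicInterior ℝ (C i)) = intrinsicInterior ℝ σ) :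
    ∑ i ∈ Finset.univ.filter
        (fun i => intrinsicInterior ℝ (C i) ⊆ intrinsicInterior ℝ σ),
      (-1 : ℤ) ^ (Set.finrank ℝ (C i)) = (-1 : ℤ) ^ n :=
  stmt4_general σ hσ hσdim C hC hdisj hpart
end

section
/- Let σ ⊆ N_ℝ be a strictly convex rational polyhedral cone with dual cone σ^∨ ⊆ M_ℝ, and let f ∈ k[M ∩ σ^∨] be a nonzero element with support S. Then the set difference σ^∨ \ Δ is bounded if and only if S meets every one-dimensional face (ray) of σ^∨, where Δ is the convex hull of ∪_{m ∈ S} (m + σ^∨). -/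
/-- A face of a cone `C`, cut out by a linear functional nonnegative on `C`. -/
def IsFaceOfCone {n : ℕ} (F C : Set (Fin n → ℝ)) : Prop :=
  ∃ φ : (Fin n → ℝ) →ₗ[ℝ] ℝ, (∀ x ∈ C, 0 ≤ φ x) ∧ F = {x ∈ C | φ x = 0}

/-- The embedding `M = ℤⁿ → M_ℝ = ℝⁿ`. -/
def latticeEmb {n : ℕ} (m : Fin n → ℤ) : Fin n → ℝ := fun i => (m i : ℝ)

/-!
If a ray `{χ = 0} ∩ C` of `C` misses the support `S ⊆ C`, then `χ > 0` on `S + C` and hence on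
its convex hull `Δ`, so the whole unbounded ray lies in `C \ Δ`.

Conversely, a pointed polyhedral cone is generated by exposed rays: a functional `φ` positive on
the nonzero generators (separation from their convex hull, using pointedness) lets us normalise
them to `φ = 1`, and every extreme point `u` of the convex hull of the normalised generators is
separated from the others, which turns into a functional nonnegative on `C` vanishing exactly on
`ℝ≥0 u`. If each such ray meets `S` away from `0`, then `S` generates `C`, and a point
`∑ bₘ m` of `C` with `∑ bₘ ≥ 1` lies in `conv S + C = Δ`, while the others have norm at most
`∑ ‖m‖`.
-/

open Set Bornology
open scoped Pointwise

theorem Set.exists_ne_zero_of_finrank_ne_zero {R M : Type*} [Semiring R] [Nontrivial R]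
    [AddCommMonoid M] [Module R M] {s : Set M} (hs : Set.finrank R s ≠ 0) : ∃ x ∈ s, x ≠ 0 := by
  by_contra! h
  exact hs (by rw [Set.finrank, Submodule.span_eq_bot.2 h, finrank_bot])

namespace PointedCone

variable {E : Type*}

section Algebraic

variable [AddCommGroup E] [Module ℝ E]

theorem zero_notMem_convexHull_of_salient {C : PointedCone ℝ E} (hC : ∀ x ∈ C, -x ∈ C → x = 0)
    {s : Finset E} (hsC : (s : Set E) ⊆ C) (hs0 : (0 : E) ∉ s) :
    (0 : E) ∉ convexHull ℝ (s : Set E) := by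
  classical
  rw [Finset.mem_convexHull]
  rintro ⟨w, hw0, hw1, hw⟩
  rw [Finset.centerMass_eq_of_sum_1 _ _ hw1] at hw
  obtain ⟨y, hy, hwy⟩ : ∃ y ∈ s, 0 < w y := by
    by_contra! h
    have : ∑ y ∈ s, w y = 0 := Finset.sum_eq_zero fun y hy => (h y hy).antisymm (hw0 y hy)
    linarith
  have hrest : ∑ z ∈ s.erase y, w z • z ∈ C :=
    C.sum_mem fun z hz => C.smul_mem (hw0 z (Finset.mem_of_mem_erase hz))
      (hsC (Finset.mem_of_mem_erase hz))
  have hsplit : w y • y + ∑ z ∈ s.erase y, w z • z = 0 :=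
    (Finset.add_sum_erase _ (fun z => w z • z) hy).trans hw
  have hwy0 : w y • y = 0 := by
    refine hC _ (C.smul_mem hwy.le (hsC hy)) ?_
    rwa [neg_eq_of_add_eq_zero_right hsplit]
  rw [smul_eq_zero_iff_right hwy.ne'] at hwy0
  exact hs0 (hwy0 ▸ hy)

theorem map_nonneg_of_mem_hull {s : Set E} {χ : E →ₗ[ℝ] ℝ} (hχ : ∀ y ∈ s, 0 ≤ χ y) {x : E}
    (hx : x ∈ hull ℝ s) : 0 ≤ χ x :=
  (Submodule.span_le (p := (positive ℝ ℝ).comap χ)).2 hχ hx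

theorem setOf_mem_hull_and_eq_zero_eq_hull_singleton {s : Finset E} {u : E} (hu : u ∈ s)
    {χ : E →ₗ[ℝ] ℝ} (hχu : χ u = 0) (hχ : ∀ y ∈ s, y ≠ u → 0 < χ y) :
    {x | x ∈ hull ℝ (s : Set E) ∧ χ x = 0} = hull ℝ {u} := by
  ext x
  constructor
  · rintro ⟨hx, hχx⟩
    obtain ⟨b, -, rfl⟩ := Submodule.mem_span_finset.1 hx
    have hterm : ∀ y ∈ s, 0 ≤ χ (b y • y) := fun y hy => by
      rw [LinearMap.map_smul_of_tower, ← Nonneg.coe_smul, smul_eq_mul]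
      rcases eq_or_ne y u with rfl | hyu
      · rw [hχu, mul_zero]
      · exact mul_nonneg (b y).2 (hχ y hy hyu).le
    rw [map_sum, Finset.sum_eq_zero_iff_of_nonneg hterm] at hχx
    rw [Finset.sum_eq_single_of_mem u hu fun y hy hyu => ?_]
    · exact Submodule.smul_mem _ _ (Submodule.subset_span rfl)
    have := hχx y hy
    rw [LinearMap.map_smul_of_tower, ← Nonneg.coe_smul, smul_eq_mul,
      mul_eq_zero_iff_right (hχ y hy hyu).ne'] at this
    rw [← Nonneg.coe_smul, this, zero_smul]
  · intro hx
    obtain ⟨a, rfl⟩ := Submodule.mem_span_singleton.1 hx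
    exact ⟨Submodule.smul_mem _ _ (Submodule.subset_span hu), by
      rw [LinearMap.map_smul_of_tower, hχu, smul_zero]⟩

theorem map_pos_of_mem_convexHull_add {C : PointedCone ℝ E} {S : Set E} {χ : E →ₗ[ℝ] ℝ}
    (hχ : ∀ x ∈ C, 0 ≤ χ x) (hS : ∀ m ∈ S, 0 < χ m) {x : E}
    (hx : x ∈ convexHull ℝ (S + (C : Set E))) : 0 < χ x := by
  refine convexHull_min ?_ (convex_halfSpace_gt χ.isLinear 0) hx
  rintro _ ⟨m, hm, c, hc, rfl⟩
  simpa using add_pos_of_pos_of_nonneg (hS m hm) (hχ c hc)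

theorem mem_hull_singleton_of_mem_hull_singleton {u m : E} (hm : m ∈ hull ℝ {u}) (hm0 : m ≠ 0) :
    u ∈ hull ℝ {m} := by
  obtain ⟨a, rfl⟩ := Submodule.mem_span_singleton.1 hm
  have ha : (a : ℝ) ≠ 0 := fun ha => hm0 (by rw [← Nonneg.coe_smul, ha, zero_smul])
  refine Submodule.mem_span_singleton.2 ⟨⟨(a : ℝ)⁻¹, inv_nonneg.2 a.2⟩, ?_⟩
  rw [Nonneg.mk_smul, ← Nonneg.coe_smul, inv_smul_smul₀ ha]

theorem finrank_hull_singleton {u : E} (hu : u ≠ 0) : Set.finrank ℝ (hull ℝ {u} : Set E) = 1 := by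
  rw [Set.finrank, Submodule.span_span_of_tower, finrank_span_singleton hu]

theorem sdiff_convexHull_add_eq_empty {C : PointedCone ℝ E} {S : Set E} (h0 : (0 : E) ∈ S) :
    (C : Set E) \ convexHull ℝ (S + (C : Set E)) = ∅ :=
  sdiff_eq_empty.2 fun x hx => subset_convexHull ℝ _ (by simpa using add_mem_add h0 hx)

end Algebraic

section Topological

variable [AddCommGroup E] [Module ℝ E] [TopologicalSpace E] [IsTopologicalAddGroup E]
  [ContinuousSMul ℝ E] [LocallyConvexSpace ℝ E] [T2Space E]

theorem exists_pos_of_salient {s : Finset E}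
    (hs : ∀ x ∈ hull ℝ (s : Set E), -x ∈ hull ℝ (s : Set E) → x = 0) :
    ∃ φ : E →L[ℝ] ℝ, ∀ v ∈ s, v ≠ 0 → 0 < φ v := by
  classical
  set t := s.filter (· ≠ 0)
  have hts : (t : Set E) ⊆ hull ℝ (s : Set E) := fun v hv =>
    Submodule.subset_span (Finset.mem_of_mem_filter v hv)
  have h0 : (0 : E) ∉ convexHull ℝ (t : Set E) :=
    zero_notMem_convexHull_of_salient hs hts (by simp [t])
  obtain ⟨φ, c, hφ0, hφ⟩ := geometric_hahn_banach_point_closed (convex_convexHull ℝ _)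
    (t.finite_toSet.isCompact_convexHull ℝ).isClosed h0
  refine ⟨φ, fun v hv hv0 => ?_⟩
  rw [map_zero] at hφ0
  exact hφ0.trans (hφ v (subset_convexHull ℝ _ (by simp [t, hv, hv0])))

theorem exists_exposing_of_mem_extremePoints {V : Finset E} {φ : E →L[ℝ] ℝ}
    (hφ : ∀ y ∈ V, φ y = 1) {u : E} (hu : u ∈ (convexHull ℝ (V : Set E)).extremePoints ℝ) :
    ∃ χ : E →L[ℝ] ℝ, χ u = 0 ∧ ∀ y ∈ V, y ≠ u → 0 < χ y := by
  have huV : u ∈ V := extremePoints_convexHull_subset hu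
  have hu' : u ∉ convexHull ℝ ((V : Set E) \ {u}) := fun h =>
    ((convex_convexHull ℝ _).mem_extremePoints_iff_mem_sdiff_convexHull_sdiff.1 hu).2
      (convexHull_mono (sdiff_subset_sdiff_left (subset_convexHull ℝ _)) h)
  obtain ⟨ψ, c, hψu, hψ⟩ := geometric_hahn_banach_point_closed (convex_convexHull ℝ _)
    ((V.finite_toSet.sdiff).isCompact_convexHull ℝ).isClosed hu'
  refine ⟨ψ - ψ u • φ, by simp [hφ u huV], fun y hy hyu => ?_⟩
  have := hψ y (subset_convexHull ℝ _ ⟨hy, hyu⟩)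
  simp only [sub_apply, smul_apply, hφ y hy, smul_eq_mul, mul_one, sub_pos]
  linarith

theorem hull_extremePoints_convexHull {s : Set E} (hs : s.Finite) :
    hull ℝ ((convexHull ℝ s).extremePoints ℝ) = hull ℝ s := by
  set X := (convexHull ℝ s).extremePoints ℝ
  have hXs : X ⊆ s := extremePoints_convexHull_subset
  refine le_antisymm (Submodule.span_mono hXs) (Submodule.span_le.2 fun v hv => ?_)
  have hconv : convexHull ℝ X = convexHull ℝ s := by
    rw [← closure_convexHull_extremePoints (hs.isCompact_convexHull ℝ) (convex_convexHull ℝ _),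
      ((hs.subset hXs).isCompact_convexHull ℝ).isClosed.closure_eq]
  exact convexHull_min Submodule.subset_span (hull ℝ X).convex (hconv ▸ subset_convexHull ℝ s hv)

theorem exists_exposed_rays_of_salient {s : Finset E}
    (hs : ∀ x ∈ hull ℝ (s : Set E), -x ∈ hull ℝ (s : Set E) → x = 0) :
    ∃ X : Set E, hull ℝ X = hull ℝ (s : Set E) ∧ ∀ u ∈ X, u ≠ 0 ∧
      ∃ χ : E →ₗ[ℝ] ℝ, (∀ x ∈ hull ℝ (s : Set E), 0 ≤ χ x) ∧
        {x | x ∈ hull ℝ (s : Set E) ∧ χ x = 0} = hull ℝ {u} := by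
  classical
  obtain ⟨φ, hφ⟩ := exists_pos_of_salient hs
  set V := (s.filter (· ≠ 0)).image fun v => (φ v)⁻¹ • v
  have hφV : ∀ y ∈ V, φ y = 1 := by
    simp only [V, Finset.mem_image, Finset.mem_filter]
    rintro _ ⟨v, ⟨hv, hv0⟩, rfl⟩
    rw [map_smul, smul_eq_mul, inv_mul_cancel₀ (hφ v hv hv0).ne']
  have hV : hull ℝ (V : Set E) = hull ℝ (s : Set E) := by
    refine le_antisymm (Submodule.span_le.2 ?_) (Submodule.span_le.2 fun v hv => ?_)
    · simp only [V, Finset.coe_image, Finset.coe_filter, image_subset_iff]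
      exact fun v hv => (hull ℝ _).smul_mem (inv_nonneg.2 (hφ v hv.1 hv.2).le)
        (Submodule.subset_span hv.1)
    · rcases eq_or_ne v 0 with rfl | hv0
      · exact zero_mem _
      rw [← smul_inv_smul₀ (hφ v hv hv0).ne' v]
      exact (hull ℝ _).smul_mem (hφ v hv hv0).le
        (Submodule.subset_span (Finset.mem_image_of_mem _ (Finset.mem_filter.2 ⟨hv, hv0⟩)))
  refine ⟨_, (hull_extremePoints_convexHull V.finite_toSet).trans hV, fun u hu => ?_⟩
  have huV : u ∈ V := extremePoints_convexHull_subset hu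
  obtain ⟨χ, hχu, hχ⟩ := exists_exposing_of_mem_extremePoints hφV hu
  refine ⟨fun h => by simpa [h] using hφV u huV, χ, ?_⟩
  rw [← hV]
  refine ⟨fun x hx => map_nonneg_of_mem_hull (fun y hy => ?_) hx,
    setOf_mem_hull_and_eq_zero_eq_hull_singleton huV hχu hχ⟩
  rcases eq_or_ne y u with rfl | hyu
  exacts [hχu.ge, (hχ y hy hyu).le]

theorem hull_eq_of_forall_exposed_ray_meets {s : Finset E}
    (hs : ∀ x ∈ hull ℝ (s : Set E), -x ∈ hull ℝ (s : Set E) → x = 0) {S : Set E}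
    (hSs : S ⊆ hull ℝ (s : Set E)) (hS0 : (0 : E) ∉ S)
    (hrays : ∀ u ≠ 0, ∀ χ : E →ₗ[ℝ] ℝ, (∀ x ∈ hull ℝ (s : Set E), 0 ≤ χ x) →
      {x | x ∈ hull ℝ (s : Set E) ∧ χ x = 0} = hull ℝ {u} → ∃ m ∈ S, m ∈ hull ℝ {u}) :
    hull ℝ (s : Set E) = hull ℝ S := by
  obtain ⟨X, hX, hXrays⟩ := exists_exposed_rays_of_salient hs
  refine le_antisymm (hX ▸ Submodule.span_le.2 fun u hu => ?_) (Submodule.span_le.2 hSs)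
  obtain ⟨hu0, χ, hχ, hface⟩ := hXrays u hu
  obtain ⟨m, hm, hmu⟩ := hrays u hu0 χ hχ hface
  exact Submodule.span_mono (singleton_subset_iff.2 hm)
    (mem_hull_singleton_of_mem_hull_singleton hmu fun h => hS0 (h ▸ hm))

end Topological

section Normed

variable [NormedAddCommGroup E] [NormedSpace ℝ E]

theorem not_isBounded_of_forall_smul_mem {A : Set E} {r : E} (hr : r ≠ 0)
    (hA : ∀ t : ℝ, 0 ≤ t → t • r ∈ A) : ¬IsBounded A := fun hbdd => by
  obtain ⟨R, hR⟩ := hbdd.exists_norm_le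
  have hrpos : 0 < ‖r‖ := norm_pos_iff.2 hr
  have := hR _ (hA ((|R| + 1) / ‖r‖) (by positivity))
  rw [norm_smul, Real.norm_of_nonneg (by positivity), div_mul_cancel₀ _ hrpos.ne'] at this
  linarith [le_abs_self R]

theorem not_isBounded_sdiff_convexHull_add {C : PointedCone ℝ E} {S : Set E} (hSC : S ⊆ C)
    {χ : E →ₗ[ℝ] ℝ} (hχ : ∀ x ∈ C, 0 ≤ χ x) (hSχ : ∀ m ∈ S, χ m ≠ 0) {r : E} (hr : r ∈ C)
    (hr0 : r ≠ 0) (hχr : χ r = 0) : ¬IsBounded ((C : Set E) \ convexHull ℝ (S + (C : Set E))) := by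
  refine not_isBounded_of_forall_smul_mem hr0 fun t ht => ⟨C.smul_mem ht hr, fun hmem => ?_⟩
  have := map_pos_of_mem_convexHull_add hχ (fun m hm => (hχ m (hSC hm)).lt_of_ne' (hSχ m hm)) hmem
  simp [hχr] at this

theorem isBounded_hull_sdiff_convexHull_add (S : Finset E) :
    IsBounded ((hull ℝ (S : Set E) : Set E) \ convexHull ℝ ((S : Set E) + hull ℝ (S : Set E))) := by
  refine (Metric.isBounded_closedBall (x := 0) (r := ∑ m ∈ S, ‖m‖)).subset ?_
  rintro _ ⟨hx, hxΔ⟩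
  obtain ⟨b, -, rfl⟩ := Submodule.mem_span_finset.1 hx
  set A := ∑ m ∈ S, (b m : ℝ)
  rcases le_or_gt 1 A with hA | hA
  · refine absurd ?_ hxΔ
    set p := S.centerMass (fun m => (b m : ℝ)) id
    have hp : p ∈ convexHull ℝ (S : Set E) :=
      S.centerMass_mem_convexHull (fun m _ => (b m).2) (by linarith) fun m hm => hm
    have hxp : ∑ m ∈ S, b m • m = p + (A - 1) • p := by
      rw [sub_smul, one_smul, add_sub_cancel]
      simp only [p, Finset.centerMass, id, Nonneg.coe_smul]
      rw [smul_inv_smul₀ (by linarith : A ≠ 0)]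
    rw [convexHull_add, (hull ℝ _).convex.convexHull_eq, hxp]
    exact add_mem_add hp <| (hull ℝ _).smul_mem (by linarith)
      (convexHull_min Submodule.subset_span (hull ℝ _).convex hp)
  · rw [mem_closedBall_zero_iff]
    refine (norm_sum_le _ _).trans (Finset.sum_le_sum fun m hm => ?_)
    rw [← Nonneg.coe_smul, norm_smul, Real.norm_of_nonneg (b m).2]
    exact mul_le_of_le_one_left (norm_nonneg _)
      ((Finset.single_le_sum (fun m _ => (b m).2) hm).trans hA.le)

end Normed

end PointedCone

open PointedCone

theorem IsPolyhedralCone.exists_eq_hull {n : ℕ} {C : Set (Fin n → ℝ)} (hC : IsPolyhedralCone C) :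
    ∃ s : Finset (Fin n → ℝ), C = hull ℝ (s : Set (Fin n → ℝ)) := by
  classical
  obtain ⟨m, v, rfl⟩ := hC
  refine ⟨Finset.univ.image v, Set.ext fun x => ?_⟩
  simp only [Finset.coe_image, Finset.coe_univ, Set.image_univ, SetLike.mem_coe,
    Submodule.mem_span_range_iff_exists_fun, Set.mem_ofPred_eq]
  constructor
  · rintro ⟨c, hc, rfl⟩
    exact ⟨fun i => ⟨c i, hc i⟩, rfl⟩
  · rintro ⟨c, rfl⟩
    exact ⟨fun i => c i, fun i => (c i).2, rfl⟩

theorem stmt10_general {n : ℕ} {k : Type*} [Field k]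
    (C : Set (Fin n → ℝ)) (hC : IsPolyhedralCone C)
    (hpointed : ∀ x ∈ C, -x ∈ C → x = 0)
    (f : AddMonoidAlgebra k (Fin n → ℤ))
    (hsupp : ∀ m ∈ f.coeff.support, latticeEmb m ∈ C) :
    Bornology.IsBounded
        (C \ convexHull ℝ (⋃ m ∈ f.coeff.support, (fun x => latticeEmb m + x) '' C)) ↔
    ∀ F : Set (Fin n → ℝ), IsFaceOfCone F C → Set.finrank ℝ F = 1 →
      ∃ m ∈ f.coeff.support, latticeEmb m ∈ F := by
  classical
  obtain ⟨s, rfl⟩ := hC.exists_eq_hull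
  set S := f.coeff.support.image latticeEmb
  have hSC : (S : Set (Fin n → ℝ)) ⊆ hull ℝ (s : Set (Fin n → ℝ)) := by
    rw [Finset.coe_image, Set.image_subset_iff]
    exact hsupp
  have hU : ⋃ m ∈ f.coeff.support,
      (fun x => latticeEmb m + x) '' (hull ℝ (s : Set (Fin n → ℝ)) : Set (Fin n → ℝ)) =
        (S : Set (Fin n → ℝ)) + hull ℝ (s : Set (Fin n → ℝ)) := by
    simp [S, ← Set.iUnion_add_left_image]
  rw [hU]
  constructor
  · rintro hbdd F ⟨χ, hχ, rfl⟩ hF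
    by_contra! hS
    obtain ⟨r, ⟨hr, hχr⟩, hr0⟩ := Set.exists_ne_zero_of_finrank_ne_zero (hF ▸ one_ne_zero)
    refine not_isBounded_sdiff_convexHull_add hSC hχ ?_ hr hr0 hχr hbdd
    simp only [S, Finset.coe_image, Set.forall_mem_image]
    exact fun m hm hχm => hS m hm ⟨hsupp m hm, hχm⟩
  · intro hrays
    by_cases h0 : (0 : Fin n → ℝ) ∈ S
    · rw [sdiff_convexHull_add_eq_empty h0]
      exact isBounded_empty
    rw [hull_eq_of_forall_exposed_ray_meets hpointed hSC h0 fun u hu χ hχ hface => ?_]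
    · exact isBounded_hull_sdiff_convexHull_add S
    obtain ⟨m, hm, hmu⟩ := hrays _ ⟨χ, hχ, hface.symm⟩ (finrank_hull_singleton hu)
    exact ⟨_, Finset.mem_image_of_mem _ hm, hmu⟩

/-- Let `C = σ^∨ ⊆ M_ℝ = ℝⁿ` be the dual of a full-dimensional strictly
convex rational polyhedral cone `σ`, so `C` is a full-dimensional pointed polyhedral cone.
Let `f ∈ k[M ∩ σ^∨]` be nonzero with support `S` and Newton polyhedron
`Δ = Conv(⋃_{m ∈ S} (m + C))`.  Then `C \ Δ` is bounded (i.e. `f` is convenient) iff `S`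
meets every one-dimensional face (ray) of `C`. -/
theorem stmt10 {n : ℕ} {k : Type*} [Field k]
    (C : Set (Fin n → ℝ)) (hC : IsPolyhedralCone C)
    (hdim : Set.finrank ℝ C = n)
    (hpointed : ∀ x ∈ C, -x ∈ C → x = 0)
    (f : AddMonoidAlgebra k (Fin n → ℤ)) (hf : f ≠ 0)
    (hsupp : ∀ m ∈ f.coeff.support, latticeEmb m ∈ C) :
    Bornology.IsBounded
        (C \ convexHull ℝ (⋃ m ∈ f.coeff.support, (fun x => latticeEmb m + x) '' C)) ↔
    ∀ F : Set (Fin n → ℝ), IsFaceOfCone F C → Set.finrank ℝ F = 1 →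
      ∃ m ∈ f.coeff.support, latticeEmb m ∈ F :=
  stmt10_general C hC hpointed f hsupp
end
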